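/- For every octonion v with Re(v) = 0, the map W_v(x) = (x·v - i·((i·x)·v))/2 satisfies W_v(1) = v and is invariant under the octonionic circle action: W_v(e^{iφ}·x) = e^{iφ}·W_v(x) for all x ∈ 𝕆 and all φ ∈ ℝ. -/

import Mathlib

noncomputable section

/-- The octonions, realized as pairs of quaternions via the Cayley–Dickson construction. -/
abbrev Octonion := Quaternion ℝ × Quaternion ℝ

/-- Cayley–Dickson multiplication on `ℍ × ℍ`. -/
def omul (x y : Octonion) : Octonion :=
  (x.1 * y.1 - star y.2 * x.2, y.2 * x.1 + x.2 * star y.1)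

/-- Octonionic conjugation. -/
def oconj (x : Octonion) : Octonion := (star x.1, -x.2)

/-- The Euclidean norm of `ℝ⁸` on the octonions. -/
def onorm (x : Octonion) : ℝ := Real.sqrt (‖x.1‖ ^ 2 + ‖x.2‖ ^ 2)

/-- The Euclidean inner product of `ℝ⁸` on the octonions. -/
def oinner (x y : Octonion) : ℝ := (inner ℝ x.1 y.1 : ℝ) + (inner ℝ x.2 y.2 : ℝ)

/-- The embedding of the complex numbers into the quaternions (span of 1 and i). -/
def cH (a : ℂ) : Quaternion ℝ := ⟨a.re, a.im, 0, 0⟩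

/-- The embedding of the complex numbers into the octonions. -/
def cO (a : ℂ) : Octonion := (cH a, 0)

/-- `i = e₁` as an octonion. -/
def oI : Octonion := ((⟨0,1,0,0⟩ : Quaternion ℝ), 0)

/-- The Hopf-symmetrized translational vector field associated to `v`. -/
def Wfield (v : Octonion) (x : Octonion) : Octonion :=
  (1 / 2 : ℝ) • (omul x v - omul oI (omul (omul oI x) v))

/- Left multiplication by a complex number `a = a.re + a.im i` is `x ↦ a.re x + a.im (i x)`, and
`W_v` is ℝ-linear, so it suffices that `W_v` commutes with `i ·`. This follows from `i (i y) = -y`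
alone: the two terms of `W_v(i x)` are `±` the two terms of `i W_v(x)`, swapped. The same identity
gives `W_v(1) = (v + v) / 2 = v`. -/

lemma omul_add_left (x y z : Octonion) : omul (x + y) z = omul x z + omul y z := by
  simp only [omul, Prod.ext_iff, Prod.fst_add, Prod.snd_add]
  constructor <;> noncomm_ring

lemma omul_add_right (x y z : Octonion) : omul x (y + z) = omul x y + omul x z := by
  simp only [omul, Prod.ext_iff, Prod.fst_add, Prod.snd_add, star_add]
  constructor <;> noncomm_ring

lemma omul_smul_left (r : ℝ) (x y : Octonion) : omul (r • x) y = r • omul x y := by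
  simp [omul, smul_sub, smul_add]

lemma omul_smul_right (r : ℝ) (x y : Octonion) : omul x (r • y) = r • omul x y := by
  simp [omul, smul_sub, smul_add]

lemma omul_neg_left (x y : Octonion) : omul (-x) y = -omul x y := by
  simpa using omul_smul_left (-1) x y

lemma omul_neg_right (x y : Octonion) : omul x (-y) = -omul x y := by
  simpa using omul_smul_right (-1) x y

lemma omul_sub_right (x y z : Octonion) : omul x (y - z) = omul x y - omul x z := by
  rw [sub_eq_add_neg, omul_add_right, omul_neg_right, sub_eq_add_neg]

lemma omul_one_left (x : Octonion) : omul (1, 0) x = x := by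
  simp [omul]

lemma oI_snd : oI.2 = 0 := rfl

lemma oI_fst_mul_self : oI.1 * oI.1 = -1 := by
  -- the literal in `oI` is elaborated over `QuaternionAlgebra ℝ (-1) 0 (-1)`, where the
  -- `Quaternion` simp lemmas do not fire
  change (⟨0, 1, 0, 0⟩ : Quaternion ℝ) * ⟨0, 1, 0, 0⟩ = -1
  ext <;> simp

lemma omul_oI_one : omul oI (1, 0) = oI := by
  simp [omul, oI_snd, Prod.ext_iff]

lemma omul_oI_omul_oI (y : Octonion) : omul oI (omul oI y) = -y := by
  simp only [omul, oI_snd, mul_zero, zero_mul, sub_zero, add_zero]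
  rw [← mul_assoc, mul_assoc y.2, oI_fst_mul_self, neg_one_mul, mul_neg_one, Prod.neg_mk]

lemma cO_eq (a : ℂ) : cO a = a.re • ((1, 0) : Octonion) + a.im • oI := by
  refine Prod.ext ?_ (by simp [cO, oI_snd])
  change (⟨a.re, a.im, 0, 0⟩ : Quaternion ℝ) = a.re • 1 + a.im • ⟨0, 1, 0, 0⟩
  ext <;> simp

lemma omul_cO (a : ℂ) (x : Octonion) : omul (cO a) x = a.re • x + a.im • omul oI x := by
  rw [cO_eq, omul_add_left, omul_smul_left, omul_smul_left, omul_one_left]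

lemma Wfield_add (v x y : Octonion) : Wfield v (x + y) = Wfield v x + Wfield v y := by
  simp only [Wfield, omul_add_left, omul_add_right]
  module

lemma Wfield_smul (v : Octonion) (r : ℝ) (x : Octonion) : Wfield v (r • x) = r • Wfield v x := by
  simp only [Wfield, omul_smul_left, omul_smul_right]
  module

lemma Wfield_one (v : Octonion) : Wfield v (1, 0) = v := by
  rw [Wfield, omul_one_left, omul_oI_one, omul_oI_omul_oI, sub_neg_eq_add, ← two_smul ℝ v, smul_smul]
  norm_num

lemma Wfield_omul_oI (v x : Octonion) : Wfield v (omul oI x) = omul oI (Wfield v x) := by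
  simp only [Wfield, omul_oI_omul_oI, omul_neg_left, omul_neg_right, omul_smul_right,
    omul_sub_right]
  congr 1
  abel

lemma Wfield_omul_cO (v x : Octonion) (a : ℂ) :
    Wfield v (omul (cO a) x) = omul (cO a) (Wfield v x) := by
  rw [omul_cO, Wfield_add, Wfield_smul, Wfield_smul, Wfield_omul_oI, omul_cO]

theorem octonion_Wfield_hopf_invariant_general (v : Octonion) :
    Wfield v (1, 0) = v ∧
    ∀ (x : Octonion) (φ : ℝ),
      Wfield v (omul (cO (Complex.exp (φ * Complex.I))) x) =
        omul (cO (Complex.exp (φ * Complex.I))) (Wfield v x) :=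
  ⟨Wfield_one v, fun x φ => Wfield_omul_cO v x (Complex.exp (φ * Complex.I))⟩

theorem octonion_Wfield_hopf_invariant (v : Octonion) (hv : v.1.re = 0) :
    Wfield v (1, 0) = v ∧
    ∀ (x : Octonion) (φ : ℝ),
      Wfield v (omul (cO (Complex.exp (φ * Complex.I))) x) =
        omul (cO (Complex.exp (φ * Complex.I))) (Wfield v x) :=
  octonion_Wfield_hopf_invariant_general v
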